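/- Space-time Kalikow-type decomposition. Assume sup_i ∑_j |W_{j→i}| < ∞, the uniform Lipschitz condition on φ with constant γ, and sup_i ∑_{k≥0}(k+1)|V_i(k)|(∑_{j∉V_i(k−1)}|W_{j→i}|∑_{n≥1} g_j(n) + ∑_{j∈V_i(k−1)}|W_{j→i}|∑_{n≥k∨1} g_j(n)) < 1/γ. Then for every i ∈ I the quantities λ_i(k) defined in the context satisfy λ_i(k) ∈ [0,1] for all k ≥ −1 and ∑_{k≥−1} λ_i(k) = 1. Moreover, for every (i,t) there exists a family of conditional probabilities (p_{(i,t)}^{[k]}(a|x))_{k≥0} such that: (1) x ↦ p_{(i,t)}^{[0]}(a|x) depends only on x_{t−1}(i); (2) for k ≥ 1, x ↦ p_{(i,t)}^{[k]}(a|x) depends only on (x_s(j) : t−k−1 ≤ s ≤ t−1, j ∈ V_i(k)); (3) p_{(i,t)}^{[k]}(1|x) ∈ [0,1] and p_{(i,t)}^{[k]}(0|x) + p_{(i,t)}^{[k]}(1|x) = 1 for all x, k ≥ 0; (4) for all x ∈ {0,1}^{I×ℤ} and a ∈ {0,1}: p_{(i,t)}(a|x) = λ_i(−1)·p_{(i,t)}^{[−1]}(a)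 + ∑_{k≥0} λ_i(k)·p_{(i,t)}^{[k]}(a|x), where p_{(i,t)}^{[−1]}(a) = r_i^{[−1]}(a)/λ_i(−1). -/

import Mathlib

open MeasureTheory Filter Set
open scoped ENNReal

noncomputable section

namespace NeuronSys

variable {I : Type*}

/-- The accumulated, weighted spiking activity felt by neuron `i` at time `t`:
`∑_j W_{j→i} ∑_{s = L_t^i}^{t-1} g_j(t-s) x_s(j)`, where the inner sum ranges over
those `s < t` such that neuron `i` has no spike strictly between `s` and `t`
(equivalently `L_t^i(x) ≤ s ≤ t-1`; if `i` never spiked before `t`, over all `s < t`). -/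
noncomputable def pot (W : I → I → ℝ) (g : I → ℕ → ℝ) (i : I) (t : ℤ)
    (x : ℤ → I → Bool) : ℝ :=
  ∑' (j : I) (s : ℤ),
    if s < t ∧ (∀ u : ℤ, s < u → u < t → x u i = false) ∧ x s j = true
    then W j i * g j (t - s).toNat else 0

/-- The last spike time `L_t^i(x) = sup {s < t : x_s(i) = 1}` (junk value if no spike). -/
noncomputable def lastSpike (x : ℤ → I → Bool) (i : I) (t : ℤ) : ℤ :=
  sSup {s : ℤ | s < t ∧ x s i = true}

/-- The spiking probability of neuron `i` at time `t` given the past `x`, for a spiking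
rate `φ_i(s, n)` depending also on the time `n = t - L_t^i` elapsed since the last spike. -/
noncomputable def spikeP (φ : I → ℝ → ℕ → ℝ) (W : I → I → ℝ) (g : I → ℕ → ℝ)
    (i : I) (t : ℤ) (x : ℤ → I → Bool) : ℝ :=
  φ i (pot W g i t x) (t - lastSpike x i t).toNat

/-- The filtration `F_t = σ(X_s(j) : j ∈ I, s ≤ t)` on `{0,1}^{I × ℤ}`. -/
def filt (I : Type*) (t : ℤ) : MeasurableSpace (ℤ → I → Bool) :=
  MeasurableSpace.comap (fun x (p : {s : ℤ // s ≤ t} × I) => x p.1.1 p.2)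
    MeasurableSpace.pi

/-- `P` is compatible with the dynamics: conditionally on `F_{t-1}` the coordinates
`(X_t(i))_{i∈I}` are independent, with `P(X_t(i) = 1 | F_{t-1}) = φ_i(potential, t - L_t^i)`. -/
def Compatible (φ : I → ℝ → ℕ → ℝ) (W : I → I → ℝ) (g : I → ℕ → ℝ)
    (P : Measure (ℤ → I → Bool)) : Prop :=
  ∀ (t : ℤ) (J : Finset I) (a : I → Bool),
    (P[(fun x => ∏ i ∈ J, (if x t i = a i then (1:ℝ) else 0)) | filt I (t-1)])
      =ᵐ[P] (fun x => ∏ i ∈ J,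
        (if a i then spikeP φ W g i t x else 1 - spikeP φ W g i t x))

/-- `G(n) = sup_i ∑_{m=1}^n g_i(m)`, as an extended real. -/
noncomputable def Gfun (g : I → ℕ → ℝ) (n : ℕ) : ℝ≥0∞ :=
  ⨆ i : I, ∑ m ∈ Finset.Icc 1 n, ENNReal.ofReal (g i m)

end NeuronSys

namespace NeuronSys

variable {I : Type*}

/-- Spiking probability when the rate `φ_i(s)` does not depend on the elapsed time. -/
noncomputable def spikePS (φ : I → ℝ → ℝ) (W : I → I → ℝ) (g : I → ℕ → ℝ)
    (i : I) (t : ℤ) (x : ℤ → I → Bool) : ℝ :=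
  φ i (pot W g i t x)

/-- Compatibility of `P` with the dynamics when `φ_i(s)` does not depend on
the elapsed time since the last spike. -/
def CompatibleS (φ : I → ℝ → ℝ) (W : I → I → ℝ) (g : I → ℕ → ℝ)
    (P : Measure (ℤ → I → Bool)) : Prop :=
  ∀ (t : ℤ) (J : Finset I) (a : I → Bool),
    (P[(fun x => ∏ i ∈ J, (if x t i = a i then (1:ℝ) else 0)) | filt I (t-1)])
      =ᵐ[P] (fun x => ∏ i ∈ J,
        (if a i then spikePS φ W g i t x else 1 - spikePS φ W g i t x))

end NeuronSys

namespace NeuronSys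

variable {I : Type*}

/-- `p_{(i,t)}(a|x)` when the spiking rate does not depend on the elapsed time. -/
noncomputable def pcondS (φ : I → ℝ → ℝ) (W : I → I → ℝ) (g : I → ℕ → ℝ)
    (i : I) (t : ℤ) (a : Bool) (x : ℤ → I → Bool) : ℝ :=
  if a then spikePS φ W g i t x else 1 - spikePS φ W g i t x

/-- `r_i^{[-1]}(a) = inf {p_{(i,0)}(a|z) : z ∈ S}`. -/
noncomputable def rnegS (φ : I → ℝ → ℝ) (W : I → I → ℝ) (g : I → ℕ → ℝ)
    (i : I) (a : Bool) : ℝ :=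
  sInf (Set.range (fun z => pcondS φ W g i 0 a z))

/-- `r_i^{[k]}(a|x) = inf {p_{(i,0)}(a|z) : z ∈ S, z = x on V_i(k) × [-k-1, -1]}`
(for `k = 0` this is the condition `z_{-1}(i) = x_{-1}(i)`, since `V_i(0) = {i}`). -/
noncomputable def rkS (φ : I → ℝ → ℝ) (W : I → I → ℝ) (g : I → ℕ → ℝ)
    (V : I → ℕ → Finset I) (i : I) (k : ℕ) (a : Bool) (x : ℤ → I → Bool) : ℝ :=
  sInf {v | ∃ z : ℤ → I → Bool,
    (∀ j ∈ V i k, ∀ s : ℤ, -(k : ℤ) - 1 ≤ s → s ≤ -1 → z s j = x s j) ∧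
    v = pcondS φ W g i 0 a z}

/-- `λ_i(-1) = α_i(-1) = r_i^{[-1]}(1) + r_i^{[-1]}(0)`. -/
noncomputable def lamNegS (φ : I → ℝ → ℝ) (W : I → I → ℝ) (g : I → ℕ → ℝ) (i : I) : ℝ :=
  rnegS φ W g i true + rnegS φ W g i false

/-- `α_i(k) = inf_x (r_i^{[k]}(1|x) + r_i^{[k]}(0|x))`. -/
noncomputable def alpS (φ : I → ℝ → ℝ) (W : I → I → ℝ) (g : I → ℕ → ℝ)
    (V : I → ℕ → Finset I) (i : I) (k : ℕ) : ℝ :=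
  sInf (Set.range (fun x => rkS φ W g V i k true x + rkS φ W g V i k false x))

/-- `λ_i(k) = α_i(k) - α_i(k-1)` for `k ≥ 0`. -/
noncomputable def lamS (φ : I → ℝ → ℝ) (W : I → I → ℝ) (g : I → ℕ → ℝ)
    (V : I → ℕ → Finset I) (i : I) : ℕ → ℝ
  | 0 => alpS φ W g V i 0 - lamNegS φ W g i
  | k + 1 => alpS φ W g V i (k + 1) - alpS φ W g V i k

end NeuronSys

open NeuronSys

open scoped Topology

/-!
Changing a configuration outside the window `V_i(k) × [-k-1, -1]` moves the potential of `i`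
at time `0` by at most the tail `windowError (k+1)` of the weighted memory kernels, so by the
Lipschitz property `r^{[k]}(0|x) + r^{[k]}(1|x) ≥ 1 - 2γ · windowError (k+1)`. The summability
hypothesis forces `windowError k → 0`, hence `α_i(k)` increases to `1` and the `λ_i(k)` are the
increments of a monotone sequence with limit `1`.

For the factors, the mass `α_i(k)` available at level `k` is split greedily between the two
symbols: the mass given to `1` up to level `k` is
`m_k(x) = max (m_{k-1}(x), α_i(k) - r^{[k]}(0|x))`, with `m_{-1} = r_i^{[-1]}(1)`.
Since `r^{[k]}(0|x)` is nondecreasing in `k`, the increments of `m` lie in `[0, λ_i(k)]`;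
`m_k` only looks at the window of level `k` and increases to `p(1|x)`, and
`p^{[k]}(1|x) = (m_k(x) - m_{k-1}(x)) / λ_i(k)`.
-/

theorem Monotone.hasSum_sub_of_tendsto {f : ℕ → ℝ} {l : ℝ} (hf : Monotone f)
    (hl : Tendsto f atTop (𝓝 l)) : HasSum (fun n => f (n + 1) - f n) (l - f 0) := by
  refine (hasSum_iff_tendsto_nat_of_nonneg (fun n => sub_nonneg.2 (hf n.le_succ)) _).2 ?_
  simp_rw [Finset.sum_range_sub]
  exact hl.sub_const _

theorem mul_div_cancel_of_nonneg_of_le {K : Type*} [CommGroupWithZero K] [PartialOrder K]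
    {d l : K} (hd : 0 ≤ d) (hdl : d ≤ l) : l * (d / l) = d := by
  rcases eq_or_ne l 0 with rfl | hl
  · simp [le_antisymm hdl hd]
  · exact mul_div_cancel₀ d hl

theorem summable_of_tsum_enorm_le {α E : Type*} [NormedAddCommGroup E] [CompleteSpace E]
    {f : α → E} {c : ℝ≥0∞} (h : ∑' a, ‖f a‖ₑ ≤ c) (hc : c ≠ ⊤) : Summable f :=
  Summable.of_norm (tsum_enorm_ne_top_iff_summable_norm.1 (ne_top_of_le_ne_top hc h))

theorem enorm_tsum_sub_tsum_le {α E : Type*} [NormedAddCommGroup E] {f f' : α → E}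
    (hf : Summable f) (hf' : Summable f') :
    ‖∑' a, f a - ∑' a, f' a‖ₑ ≤ ∑' a, ‖f a - f' a‖ₑ := by
  rw [← hf.tsum_sub hf']
  exact enorm_tsum_le_tsum_enorm

theorem tsum_int_ite_le_neg {M : Type*} [AddCommMonoid M] [TopologicalSpace M] (f : ℕ → M)
    (m : ℕ) :
    ∑' s : ℤ, (if s ≤ -(m : ℤ) then f (-s).toNat else 0) = ∑' n : ℕ, if m ≤ n then f n else 0 := by
  have hinj : Function.Injective (fun n : ℕ => -(n : ℤ)) := fun a b h => by simpa using h
  rw [← hinj.tsum_eq]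
  · simp
  · intro s hs
    have hsm : s ≤ -(m : ℤ) := by_contra fun h => hs (if_neg h)
    exact ⟨(-s).toNat, by dsimp only; omega⟩

section GreedyMass

variable (A v : ℕ → ℝ) (m₀ : ℝ)

def greedyMass : ℕ → ℝ
  | 0 => m₀
  | n + 1 => max (greedyMass n) (A (n + 1) - v (n + 1))

theorem greedyMass_monotone : Monotone (greedyMass A v m₀) :=
  monotone_nat_of_le_succ fun _ => le_max_left _ _

variable {A v m₀}

theorem sub_le_greedyMass (h₀ : A 0 - v 0 ≤ m₀) : ∀ n, A n - v n ≤ greedyMass A v m₀ n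
  | 0 => h₀
  | _ + 1 => le_max_right _ _

theorem greedyMass_le {p : ℝ} (h₀ : m₀ ≤ p) (hp : ∀ n, A n - v n ≤ p) :
    ∀ n, greedyMass A v m₀ n ≤ p
  | 0 => h₀
  | n + 1 => max_le (greedyMass_le h₀ hp n) (hp _)

theorem greedyMass_succ_sub_le (hA : Monotone A) (hv : Monotone v) (h₀ : A 0 - v 0 ≤ m₀)
    (n : ℕ) : greedyMass A v m₀ (n + 1) - greedyMass A v m₀ n ≤ A (n + 1) - A n := by
  have hm := sub_le_greedyMass h₀ n
  have hAn := hA n.le_succ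
  have hvn := hv n.le_succ
  rw [greedyMass, sub_le_iff_le_add]
  exact max_le (by linarith) (by linarith)

theorem tendsto_greedyMass {p : ℝ} (hA : Tendsto A atTop (𝓝 1)) (hv : ∀ n, v n ≤ 1 - p)
    (h₀ : A 0 - v 0 ≤ m₀) (h₀p : m₀ ≤ p) (hp : ∀ n, A n - v n ≤ p) :
    Tendsto (greedyMass A v m₀) atTop (𝓝 p) := by
  have hlow : Tendsto (fun n => A n - (1 - p)) atTop (𝓝 p) := by
    simpa using hA.sub_const (1 - p)
  refine tendsto_of_tendsto_of_tendsto_of_le_of_le hlow tendsto_const_nhds (fun n => ?_)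
    (greedyMass_le h₀p hp)
  linarith [sub_le_greedyMass h₀ n, hv n]

theorem greedyMass_congr {v' : ℕ → ℝ} {n : ℕ} (h : ∀ k ≤ n, v k = v' k) :
    greedyMass A v m₀ n = greedyMass A v' m₀ n := by
  induction n with
  | zero => rfl
  | succ n ih =>
    rw [greedyMass, greedyMass, ih fun k hk => h k (hk.trans n.le_succ), h (n + 1) le_rfl]

end GreedyMass

namespace NeuronSys

section Potential

variable {I : Type*}

def EqOnWindow (S : Finset I) (k : ℕ) (x y : ℤ → I → Bool) : Prop :=
  ∀ j ∈ S, ∀ s : ℤ, -(k : ℤ) - 1 ≤ s → s ≤ -1 → x s j = y s j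

theorem EqOnWindow.symm {S : Finset I} {k : ℕ} {x y : ℤ → I → Bool} (h : EqOnWindow S k x y) :
    EqOnWindow S k y x :=
  fun j hj s h₁ h₂ => (h j hj s h₁ h₂).symm

theorem EqOnWindow.trans {S : Finset I} {k : ℕ} {x y z : ℤ → I → Bool}
    (hxy : EqOnWindow S k x y) (hyz : EqOnWindow S k y z) : EqOnWindow S k x z :=
  fun j hj s h₁ h₂ => (hxy j hj s h₁ h₂).trans (hyz j hj s h₁ h₂)

theorem EqOnWindow.mono {S T : Finset I} {k l : ℕ} {x y : ℤ → I → Bool}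
    (h : EqOnWindow T l x y) (hST : S ⊆ T) (hkl : k ≤ l) : EqOnWindow S k x y :=
  fun j hj s h₁ h₂ => h j (hST hj) s (by omega) h₂

def gTail (g : I → ℕ → ℝ) (j : I) (m : ℕ) : ℝ≥0∞ :=
  ∑' n : ℕ, if m ≤ n then ENNReal.ofReal (g j n) else 0

theorem gTail_ne_top {g : I → ℕ → ℝ} (hg : ∀ j n, 0 ≤ g j n) (hgs : ∀ j, Summable (g j))
    (j : I) (m : ℕ) : gTail g j m ≠ ⊤ := by
  refine ne_top_of_le_ne_top (b := ∑' n, ENNReal.ofReal (g j n)) ?_ ?_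
  · rw [← ENNReal.ofReal_tsum_of_nonneg (hg j) (hgs j)]
    exact ENNReal.ofReal_ne_top
  · exact ENNReal.tsum_le_tsum fun n => by split_ifs <;> simp

variable (W : I → I → ℝ) (g : I → ℕ → ℝ) (i : I)

def potTerm (x : ℤ → I → Bool) (j : I) (s : ℤ) : ℝ :=
  if s < 0 ∧ (∀ u : ℤ, s < u → u < 0 → x u i = false) ∧ x s j = true
  then W j i * g j (0 - s).toNat else 0

theorem pot_zero_eq (x : ℤ → I → Bool) :
    pot W g i 0 x = ∑' (j : I) (s : ℤ), potTerm W g i x j s :=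
  rfl

theorem tsum_ite_le_neg_eq_gTail (j : I) (m : ℕ) :
    ∑' s : ℤ, (if s ≤ -(m : ℤ) then ‖W j i‖ₑ * ENNReal.ofReal (g j (-s).toNat) else 0)
      = ‖W j i‖ₑ * gTail g j m := by
  rw [tsum_int_ite_le_neg (fun n => ‖W j i‖ₑ * ENNReal.ofReal (g j n)), gTail,
    ← ENNReal.tsum_mul_left]
  simp_rw [mul_ite, mul_zero]

variable {W g i}

theorem enorm_potTerm_le (hg : ∀ j n, 0 ≤ g j n) (x : ℤ → I → Bool) (j : I) (s : ℤ) :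
    ‖potTerm W g i x j s‖ₑ
      ≤ if s ≤ -1 then ‖W j i‖ₑ * ENNReal.ofReal (g j (-s).toNat) else 0 := by
  unfold potTerm
  by_cases hs : s ≤ -1
  · split_ifs <;> simp [enorm_mul, Real.enorm_of_nonneg (hg _ _)]
  · simp [show ¬ s < 0 by omega]

theorem enorm_potTerm_sub_le (hg : ∀ j n, 0 ≤ g j n) (x z : ℤ → I → Bool) (j : I) (s : ℤ) :
    ‖potTerm W g i z j s - potTerm W g i x j s‖ₑ
      ≤ if s ≤ -1 then ‖W j i‖ₑ * ENNReal.ofReal (g j (-s).toNat) else 0 := by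
  unfold potTerm
  by_cases hs : s ≤ -1
  · split_ifs <;> simp [enorm_mul, Real.enorm_of_nonneg (hg _ _)]
  · simp [show ¬ s < 0 by omega]

theorem potTerm_eq_of_eqOnWindow {S : Finset I} {k : ℕ} {x z : ℤ → I → Bool} (hi : i ∈ S)
    (hzx : EqOnWindow S k z x) {j : I} (hj : j ∈ S) {s : ℤ} (hs : -(k : ℤ) - 1 ≤ s) :
    potTerm W g i z j s = potTerm W g i x j s := by
  unfold potTerm
  refine if_congr (and_congr_right fun hs₀ => ?_) rfl rfl
  rw [hzx j hj s hs (by omega)]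
  refine and_congr_left fun _ => forall_congr' fun u => imp_congr_right fun hsu =>
    imp_congr_right fun hu => ?_
  rw [hzx i hi u (by omega) (by omega)]

variable [DecidableEq I]

theorem tsum_enorm_potTerm_sub_le (hg : ∀ j n, 0 ≤ g j n) {S : Finset I} {k : ℕ}
    {x z : ℤ → I → Bool} (hi : i ∈ S) (hzx : EqOnWindow S k z x) (j : I) :
    ∑' s, ‖potTerm W g i z j s - potTerm W g i x j s‖ₑ
      ≤ ‖W j i‖ₑ * gTail g j (if j ∈ S then k + 1 else 1) := by
  rw [← tsum_ite_le_neg_eq_gTail]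
  refine ENNReal.tsum_le_tsum fun s => ?_
  have h := enorm_potTerm_sub_le (i := i) (W := W) hg x z j s
  by_cases hjs : j ∈ S ∧ -(k : ℤ) - 1 < s
  · rw [potTerm_eq_of_eqOnWindow hi hzx hjs.1 hjs.2.le, sub_self, enorm_zero]
    exact zero_le
  · refine h.trans (le_of_eq ?_)
    rw [not_and, not_lt] at hjs
    by_cases hj : j ∈ S <;> simp only [hj, if_true, if_false, forall_const] at hjs ⊢ <;>
      push_cast <;> split_ifs <;> first | rfl | omega

theorem enorm_pot_sub_le (hg : ∀ j n, 0 ≤ g j n) (hgs : ∀ j, Summable (g j))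
    (hW : ∑' j, ‖W j i‖ₑ * gTail g j 1 ≠ ⊤) {S : Finset I} {k : ℕ} {x z : ℤ → I → Bool}
    (hi : i ∈ S) (hzx : EqOnWindow S k z x) :
    ‖pot W g i 0 z - pot W g i 0 x‖ₑ
      ≤ ∑' j, ‖W j i‖ₑ * gTail g j (if j ∈ S then k + 1 else 1) := by
  have hrow : ∀ y j, ∑' s, ‖potTerm W g i y j s‖ₑ ≤ ‖W j i‖ₑ * gTail g j 1 := fun y j =>
    (ENNReal.tsum_le_tsum (enorm_potTerm_le hg y j)).trans_eq
      (by exact_mod_cast tsum_ite_le_neg_eq_gTail W g i j 1)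
  have hinner : ∀ y j, Summable (potTerm W g i y j) := fun y j =>
    summable_of_tsum_enorm_le (hrow y j)
      (ENNReal.mul_ne_top enorm_ne_top (gTail_ne_top hg hgs j 1))
  have houter : ∀ y, Summable fun j => ∑' s, potTerm W g i y j s := fun y =>
    summable_of_tsum_enorm_le (ENNReal.tsum_le_tsum fun j =>
      enorm_tsum_le_tsum_enorm.trans (hrow y j)) hW
  rw [pot_zero_eq, pot_zero_eq]
  calc ‖∑' j, ∑' s, potTerm W g i z j s - ∑' j, ∑' s, potTerm W g i x j s‖ₑ
      ≤ ∑' j, ‖∑' s, potTerm W g i z j s - ∑' s, potTerm W g i x j s‖ₑ :=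
        enorm_tsum_sub_tsum_le (houter z) (houter x)
    _ ≤ ∑' j, ∑' s, ‖potTerm W g i z j s - potTerm W g i x j s‖ₑ :=
        ENNReal.tsum_le_tsum fun j => enorm_tsum_sub_tsum_le (hinner z j) (hinner x j)
    _ ≤ _ := ENNReal.tsum_le_tsum (tsum_enorm_potTerm_sub_le hg hi hzx)

end Potential

section LowerBounds

variable {I : Type*} {φ : I → ℝ → ℝ} {W : I → I → ℝ} {g : I → ℕ → ℝ} {V : I → ℕ → Finset I}
  {i : I}

theorem pot_shift (t : ℤ) (x : ℤ → I → Bool) :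
    pot W g i t x = pot W g i 0 (fun s j => x (s + t) j) := by
  unfold pot
  refine tsum_congr fun j => ?_
  rw [← (Equiv.addRight t).tsum_eq]
  refine tsum_congr fun s => if_congr ?_ (by simp) rfl
  simp only [Equiv.coe_addRight]
  refine and_congr (by omega) (and_congr_left fun _ => ⟨fun h u h₁ h₂ => ?_, fun h u h₁ h₂ => ?_⟩)
  · simpa using h (u + t) (by omega) (by omega)
  · simpa using h (u - t) (by omega) (by omega)

theorem pcondS_shift (t : ℤ) (a : Bool) (x : ℤ → I → Bool) :
    pcondS φ W g i t a x = pcondS φ W g i 0 a (fun s j => x (s + t) j) := by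
  simp only [pcondS, spikePS, pot_shift t x]

theorem pcondS_mem_Icc (hφ : ∀ i s, φ i s ∈ Icc (0 : ℝ) 1) (t : ℤ) (a : Bool)
    (x : ℤ → I → Bool) : pcondS φ W g i t a x ∈ Icc (0 : ℝ) 1 := by
  obtain ⟨h₀, h₁⟩ := hφ i (pot W g i t x)
  cases a <;> simp only [pcondS, spikePS, Bool.false_eq_true, if_false, if_true, mem_Icc] <;>
    constructor <;> linarith

theorem pcondS_true_add_false (t : ℤ) (x : ℤ → I → Bool) :
    pcondS φ W g i t true x + pcondS φ W g i t false x = 1 := by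
  simp [pcondS]

theorem abs_pcondS_sub (t : ℤ) (a : Bool) (x z : ℤ → I → Bool) :
    |pcondS φ W g i t a z - pcondS φ W g i t a x|
      = |φ i (pot W g i t z) - φ i (pot W g i t x)| := by
  cases a
  · simp only [pcondS, spikePS, Bool.false_eq_true, if_false, sub_sub_sub_cancel_left, abs_sub_comm]
  · simp [pcondS, spikePS]

theorem rnegS_nonneg (hφ : ∀ i s, φ i s ∈ Icc (0 : ℝ) 1) (a : Bool) : 0 ≤ rnegS φ W g i a :=
  le_csInf (range_nonempty _) (by rintro _ ⟨z, rfl⟩; exact (pcondS_mem_Icc hφ 0 a z).1)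

theorem rnegS_le (hφ : ∀ i s, φ i s ∈ Icc (0 : ℝ) 1) (a : Bool) (z : ℤ → I → Bool) :
    rnegS φ W g i a ≤ pcondS φ W g i 0 a z :=
  csInf_le ⟨0, by rintro _ ⟨y, rfl⟩; exact (pcondS_mem_Icc hφ 0 a y).1⟩ ⟨z, rfl⟩

theorem rnegS_le_lamNegS (hφ : ∀ i s, φ i s ∈ Icc (0 : ℝ) 1) (a : Bool) :
    rnegS φ W g i a ≤ lamNegS φ W g i := by
  cases a
  · exact le_add_of_nonneg_left (rnegS_nonneg hφ true)
  · exact le_add_of_nonneg_right (rnegS_nonneg hφ false)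

theorem lamNegS_mem_Icc (hφ : ∀ i s, φ i s ∈ Icc (0 : ℝ) 1) :
    lamNegS φ W g i ∈ Icc (0 : ℝ) 1 := by
  let x : ℤ → I → Bool := fun _ _ => false
  exact ⟨add_nonneg (rnegS_nonneg hφ true) (rnegS_nonneg hφ false),
    (add_le_add (rnegS_le hφ true x) (rnegS_le hφ false x)).trans_eq (pcondS_true_add_false 0 x)⟩

theorem le_rkS {k : ℕ} {a : Bool} {x : ℤ → I → Bool} {c : ℝ}
    (h : ∀ z, EqOnWindow (V i k) k z x → c ≤ pcondS φ W g i 0 a z) : c ≤ rkS φ W g V i k a x :=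
  le_csInf ⟨_, x, fun _ _ _ _ _ => rfl, rfl⟩ (by rintro _ ⟨z, hz, rfl⟩; exact h z hz)

theorem rkS_le (hφ : ∀ i s, φ i s ∈ Icc (0 : ℝ) 1) {k : ℕ} {a : Bool} {x z : ℤ → I → Bool}
    (hz : EqOnWindow (V i k) k z x) : rkS φ W g V i k a x ≤ pcondS φ W g i 0 a z :=
  csInf_le ⟨0, by rintro _ ⟨y, -, rfl⟩; exact (pcondS_mem_Icc hφ 0 a y).1⟩ ⟨z, hz, rfl⟩

theorem rkS_mono (hφ : ∀ i s, φ i s ∈ Icc (0 : ℝ) 1) (hV : Monotone (V i)) {k l : ℕ}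
    (hkl : k ≤ l) (a : Bool) (x : ℤ → I → Bool) :
    rkS φ W g V i k a x ≤ rkS φ W g V i l a x :=
  le_rkS fun _ hz => rkS_le hφ (hz.mono (hV hkl) hkl)

theorem rkS_congr (hφ : ∀ i s, φ i s ∈ Icc (0 : ℝ) 1) {k : ℕ} {a : Bool} {x y : ℤ → I → Bool}
    (hxy : EqOnWindow (V i k) k x y) : rkS φ W g V i k a x = rkS φ W g V i k a y :=
  le_antisymm (le_rkS fun _ hz => rkS_le hφ (hz.trans hxy.symm))
    (le_rkS fun _ hz => rkS_le hφ (hz.trans hxy))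

theorem pcondS_sub_le_rkS {γ ε : ℝ} (hLip : ∀ i s s', |φ i s - φ i s'| ≤ γ * |s - s'|)
    (hγ : 0 ≤ γ) {k : ℕ} (a : Bool) {x : ℤ → I → Bool}
    (hε : ∀ z, EqOnWindow (V i k) k z x → |pot W g i 0 z - pot W g i 0 x| ≤ ε) :
    pcondS φ W g i 0 a x - γ * ε ≤ rkS φ W g V i k a x := by
  refine le_rkS fun z hz => ?_
  have h : |pcondS φ W g i 0 a z - pcondS φ W g i 0 a x| ≤ γ * ε :=
    (abs_pcondS_sub 0 a x z).trans_le ((hLip _ _ _).trans (mul_le_mul_of_nonneg_left (hε z hz) hγ))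
  linarith [(abs_le.1 h).1]

theorem le_alpS {k : ℕ} {c : ℝ}
    (h : ∀ x, c ≤ rkS φ W g V i k true x + rkS φ W g V i k false x) : c ≤ alpS φ W g V i k :=
  le_csInf (range_nonempty _) (by rintro _ ⟨x, rfl⟩; exact h x)

theorem alpS_le (hφ : ∀ i s, φ i s ∈ Icc (0 : ℝ) 1) (k : ℕ) (x : ℤ → I → Bool) :
    alpS φ W g V i k ≤ rkS φ W g V i k true x + rkS φ W g V i k false x := by
  have h₀ : ∀ a y, 0 ≤ rkS φ W g V i k a y := fun a _ =>
    le_rkS fun z _ => (pcondS_mem_Icc hφ 0 a z).1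
  exact csInf_le ⟨0, by rintro _ ⟨y, rfl⟩; exact add_nonneg (h₀ true y) (h₀ false y)⟩ ⟨x, rfl⟩

end LowerBounds

section Levels

variable {I : Type*} (φ : I → ℝ → ℝ) (W : I → I → ℝ) (g : I → ℕ → ℝ) (V : I → ℕ → Finset I)
  (i : I)

/-- `r_i^{[n-1]}(a|x)`: level `0` is the unconditioned bound `r_i^{[-1]}(a)`. -/
def rSeq (a : Bool) (x : ℤ → I → Bool) : ℕ → ℝ
  | 0 => rnegS φ W g i a
  | k + 1 => rkS φ W g V i k a x

/-- `α_i(n-1)`. -/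
def alphaSeq : ℕ → ℝ
  | 0 => lamNegS φ W g i
  | k + 1 => alpS φ W g V i k

theorem lamS_eq_alphaSeq_sub (k : ℕ) :
    lamS φ W g V i k = alphaSeq φ W g V i (k + 1) - alphaSeq φ W g V i k := by
  cases k <;> rfl

variable {φ W g V i}

theorem rSeq_le_pcondS (hφ : ∀ i s, φ i s ∈ Icc (0 : ℝ) 1) (a : Bool) (x : ℤ → I → Bool) :
    ∀ n, rSeq φ W g V i a x n ≤ pcondS φ W g i 0 a x
  | 0 => rnegS_le hφ a x
  | _ + 1 => rkS_le hφ fun _ _ _ _ _ => rfl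

theorem rSeq_monotone (hφ : ∀ i s, φ i s ∈ Icc (0 : ℝ) 1) (hV : Monotone (V i)) (a : Bool)
    (x : ℤ → I → Bool) : Monotone (rSeq φ W g V i a x) :=
  monotone_nat_of_le_succ fun
    | 0 => le_rkS fun z _ => rnegS_le hφ a z
    | k + 1 => rkS_mono hφ hV k.le_succ a x

theorem rSeq_congr (hφ : ∀ i s, φ i s ∈ Icc (0 : ℝ) 1) (hV : Monotone (V i)) {k : ℕ}
    {x y : ℤ → I → Bool} (hxy : EqOnWindow (V i k) k x y) (a : Bool) :
    ∀ n ≤ k + 1, rSeq φ W g V i a x n = rSeq φ W g V i a y n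
  | 0, _ => rfl
  | l + 1, hl => rkS_congr hφ (hxy.mono (hV (by omega)) (by omega))

theorem alphaSeq_le_rSeq_add (hφ : ∀ i s, φ i s ∈ Icc (0 : ℝ) 1) (x : ℤ → I → Bool) :
    ∀ n, alphaSeq φ W g V i n ≤ rSeq φ W g V i true x n + rSeq φ W g V i false x n
  | 0 => le_rfl
  | k + 1 => alpS_le hφ k x

theorem alphaSeq_monotone (hφ : ∀ i s, φ i s ∈ Icc (0 : ℝ) 1) (hV : Monotone (V i)) :
    Monotone (alphaSeq φ W g V i) :=
  monotone_nat_of_le_succ fun n => le_alpS fun x => (alphaSeq_le_rSeq_add hφ x n).trans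
    (add_le_add (rSeq_monotone hφ hV true x n.le_succ) (rSeq_monotone hφ hV false x n.le_succ))

theorem alphaSeq_nonneg (hφ : ∀ i s, φ i s ∈ Icc (0 : ℝ) 1) (hV : Monotone (V i)) (n : ℕ) :
    0 ≤ alphaSeq φ W g V i n :=
  (lamNegS_mem_Icc hφ).1.trans (alphaSeq_monotone hφ hV n.zero_le)

theorem alphaSeq_le_one (hφ : ∀ i s, φ i s ∈ Icc (0 : ℝ) 1) (n : ℕ) :
    alphaSeq φ W g V i n ≤ 1 := by
  let x : ℤ → I → Bool := fun _ _ => false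
  calc alphaSeq φ W g V i n ≤ rSeq φ W g V i true x n + rSeq φ W g V i false x n :=
        alphaSeq_le_rSeq_add hφ x n
    _ ≤ pcondS φ W g i 0 true x + pcondS φ W g i 0 false x :=
        add_le_add (rSeq_le_pcondS hφ true x n) (rSeq_le_pcondS hφ false x n)
    _ = 1 := pcondS_true_add_false 0 x

theorem lamS_mem_Icc (hφ : ∀ i s, φ i s ∈ Icc (0 : ℝ) 1) (hV : Monotone (V i)) (k : ℕ) :
    lamS φ W g V i k ∈ Icc (0 : ℝ) 1 := by
  rw [lamS_eq_alphaSeq_sub]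
  have hle := alphaSeq_le_one (W := W) (g := g) (V := V) (i := i) hφ (k + 1)
  have hnn := alphaSeq_nonneg (W := W) (g := g) hφ hV k
  exact ⟨sub_nonneg.2 (alphaSeq_monotone hφ hV k.le_succ), by linarith⟩

end Levels

section WindowError

variable {I : Type*} [DecidableEq I] (W : I → I → ℝ) (g : I → ℕ → ℝ) (V : I → ℕ → Finset I)
  (i : I)

/-- The bracket of the summability hypothesis; `windowError (k+1)` bounds the change of the
potential between configurations that agree on the window `V_i(k) × [-k-1, -1]`. -/
def windowError (k : ℕ) : ℝ≥0∞ :=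
  (∑' j : I, (if j ∈ (if k = 0 then (∅ : Finset I) else V i (k-1)) then 0
      else ENNReal.ofReal |W j i| *
        ∑' n : ℕ, if 1 ≤ n then ENNReal.ofReal (g j n) else 0))
  + ∑' j : I, (if j ∈ (if k = 0 then (∅ : Finset I) else V i (k-1)) then
      ENNReal.ofReal |W j i| *
        ∑' n : ℕ, (if max k 1 ≤ n then ENNReal.ofReal (g j n) else 0)
    else 0)

theorem windowError_zero : windowError W g V i 0 = ∑' j, ‖W j i‖ₑ * gTail g j 1 := by
  simp [windowError, gTail, Real.enorm_eq_ofReal_abs]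

theorem windowError_succ (k : ℕ) :
    windowError W g V i (k + 1)
      = ∑' j, ‖W j i‖ₑ * gTail g j (if j ∈ V i k then k + 1 else 1) := by
  rw [windowError, ← ENNReal.tsum_add]
  refine tsum_congr fun j => ?_
  by_cases hj : j ∈ V i k <;> simp [hj, gTail, Real.enorm_eq_ofReal_abs]

variable {W g V i}

theorem windowError_le_mul {k : ℕ} (hi : i ∈ V i k) :
    windowError W g V i k ≤ ((k : ℝ≥0∞) + 1) * (V i k).card * windowError W g V i k := by
  refine le_mul_of_one_le_left zero_le (one_le_mul_of_one_le_of_one_le le_add_self ?_)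
  exact_mod_cast Finset.card_pos.2 ⟨i, hi⟩

theorem enorm_pot_sub_le_windowError (hg : ∀ j n, 0 ≤ g j n) (hgs : ∀ j, Summable (g j))
    (hW : windowError W g V i 0 ≠ ⊤) {k : ℕ} (hi : i ∈ V i k) {x z : ℤ → I → Bool}
    (hzx : EqOnWindow (V i k) k z x) :
    ‖pot W g i 0 z - pot W g i 0 x‖ₑ ≤ windowError W g V i (k + 1) := by
  rw [windowError_succ]
  exact enorm_pot_sub_le hg hgs (windowError_zero W g V i ▸ hW) hi hzx

end WindowError

section Convergence

variable {I : Type*} [DecidableEq I] {φ : I → ℝ → ℝ} {W : I → I → ℝ} {g : I → ℕ → ℝ}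
  {V : I → ℕ → Finset I} {i : I} {γ : ℝ}

theorem one_sub_le_alphaSeq_succ (hLip : ∀ i s s', |φ i s - φ i s'| ≤ γ * |s - s'|)
    (hγ : 0 ≤ γ) (hg : ∀ j n, 0 ≤ g j n) (hgs : ∀ j, Summable (g j))
    (hW : windowError W g V i 0 ≠ ⊤) {k : ℕ} (hi : i ∈ V i k)
    (hk : windowError W g V i (k + 1) ≠ ⊤) :
    1 - 2 * (γ * (windowError W g V i (k + 1)).toReal) ≤ alphaSeq φ W g V i (k + 1) := by
  refine le_alpS fun x => ?_
  have hε : ∀ z, EqOnWindow (V i k) k z x →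
      |pot W g i 0 z - pot W g i 0 x| ≤ (windowError W g V i (k + 1)).toReal := fun z hz => by
    rw [← ENNReal.ofReal_le_iff_le_toReal hk, ← Real.enorm_eq_ofReal_abs]
    exact enorm_pot_sub_le_windowError hg hgs hW hi hz
  linarith [pcondS_sub_le_rkS hLip hγ true hε, pcondS_sub_le_rkS hLip hγ false hε,
    pcondS_true_add_false (φ := φ) (W := W) (g := g) (i := i) 0 x]

theorem tendsto_alphaSeq (hφ : ∀ i s, φ i s ∈ Icc (0 : ℝ) 1)
    (hLip : ∀ i s s', |φ i s - φ i s'| ≤ γ * |s - s'|) (hγ : 0 ≤ γ) (hg : ∀ j n, 0 ≤ g j n)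
    (hgs : ∀ j, Summable (g j)) (hi : ∀ k, i ∈ V i k)
    (hsum : ∑' k : ℕ, ((k : ℝ≥0∞) + 1) * (V i k).card * windowError W g V i k ≠ ⊤) :
    Tendsto (alphaSeq φ W g V i) atTop (𝓝 1) := by
  have hfin : ∀ k, windowError W g V i k ≠ ⊤ := fun k => ne_top_of_le_ne_top hsum
    ((windowError_le_mul (hi k)).trans (ENNReal.le_tsum (f := fun k : ℕ =>
      ((k : ℝ≥0∞) + 1) * (V i k).card * windowError W g V i k) k))
  have hzero : Tendsto (windowError W g V i) atTop (𝓝 0) :=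
    tendsto_of_tendsto_of_tendsto_of_le_of_le tendsto_const_nhds
      (ENNReal.tendsto_atTop_zero_of_tsum_ne_top hsum) (fun _ => zero_le)
      (fun k => windowError_le_mul (hi k))
  have hlow : Tendsto (fun k => 1 - 2 * (γ * (windowError W g V i (k + 1)).toReal)) atTop
      (𝓝 1) := by
    have h := (ENNReal.tendsto_toReal ENNReal.zero_ne_top).comp
      (hzero.comp (tendsto_add_atTop_nat 1))
    simpa using ((h.const_mul γ).const_mul 2).const_sub 1
  rw [← tendsto_add_atTop_iff_nat 1]
  exact tendsto_of_tendsto_of_tendsto_of_le_of_le hlow tendsto_const_nhds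
    (fun k => one_sub_le_alphaSeq_succ hLip hγ hg hgs (hfin 0) (hi k) (hfin (k + 1)))
    (fun k => alphaSeq_le_one hφ (k + 1))

end Convergence

section Decomposition

variable {I : Type*} (φ : I → ℝ → ℝ) (W : I → I → ℝ) (g : I → ℕ → ℝ) (V : I → ℕ → Finset I)
  (i : I)

/-- The mass `m_{n-1}(x)` given to the symbol `1` by the levels `-1, …, n-1`. -/
def spikeMass (x : ℤ → I → Bool) : ℕ → ℝ :=
  greedyMass (alphaSeq φ W g V i) (rSeq φ W g V i false x) (rnegS φ W g i true)

/-- The factor `p^{[k]}(a|x)`, at time `0`. -/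
def kalikowProb (k : ℕ) (a : Bool) (x : ℤ → I → Bool) : ℝ :=
  if a then (spikeMass φ W g V i x (k + 1) - spikeMass φ W g V i x k) / lamS φ W g V i k
  else 1 - (spikeMass φ W g V i x (k + 1) - spikeMass φ W g V i x k) / lamS φ W g V i k

variable {φ W g V i}

theorem spikeMass_succ_sub_mem_Icc (hφ : ∀ i s, φ i s ∈ Icc (0 : ℝ) 1) (hV : Monotone (V i))
    (x : ℤ → I → Bool) (k : ℕ) :
    spikeMass φ W g V i x (k + 1) - spikeMass φ W g V i x k ∈ Icc 0 (lamS φ W g V i k) := by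
  refine ⟨sub_nonneg.2 (greedyMass_monotone _ _ _ k.le_succ), ?_⟩
  rw [lamS_eq_alphaSeq_sub]
  exact greedyMass_succ_sub_le (alphaSeq_monotone hφ hV) (rSeq_monotone hφ hV false x)
    (add_sub_cancel_right _ _).le k

theorem tendsto_spikeMass (hφ : ∀ i s, φ i s ∈ Icc (0 : ℝ) 1)
    (hA : Tendsto (alphaSeq φ W g V i) atTop (𝓝 1)) (x : ℤ → I → Bool) :
    Tendsto (spikeMass φ W g V i x) atTop (𝓝 (pcondS φ W g i 0 true x)) := by
  have hsum := pcondS_true_add_false (φ := φ) (W := W) (g := g) (i := i) 0 x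
  refine tendsto_greedyMass hA (fun n => ?_) (add_sub_cancel_right _ _).le (rnegS_le hφ true x)
    (fun n => ?_)
  · exact (rSeq_le_pcondS hφ false x n).trans (by linarith)
  · exact sub_le_iff_le_add.2 ((alphaSeq_le_rSeq_add hφ x n).trans
      (add_le_add_left (rSeq_le_pcondS hφ true x n) _))

theorem kalikowProb_true_mem_Icc (hφ : ∀ i s, φ i s ∈ Icc (0 : ℝ) 1) (hV : Monotone (V i))
    (k : ℕ) (x : ℤ → I → Bool) : kalikowProb φ W g V i k true x ∈ Icc (0 : ℝ) 1 := by
  obtain ⟨h₀, h₁⟩ := spikeMass_succ_sub_mem_Icc hφ hV x k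
  exact ⟨div_nonneg h₀ (h₀.trans h₁), div_le_one_of_le₀ h₁ (h₀.trans h₁)⟩

theorem kalikowProb_false_add_true (k : ℕ) (x : ℤ → I → Bool) :
    kalikowProb φ W g V i k false x + kalikowProb φ W g V i k true x = 1 := by
  simp [kalikowProb]

theorem lamS_mul_kalikowProb_true (hφ : ∀ i s, φ i s ∈ Icc (0 : ℝ) 1) (hV : Monotone (V i))
    (k : ℕ) (x : ℤ → I → Bool) :
    lamS φ W g V i k * kalikowProb φ W g V i k true x
      = spikeMass φ W g V i x (k + 1) - spikeMass φ W g V i x k :=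
  mul_div_cancel_of_nonneg_of_le (spikeMass_succ_sub_mem_Icc hφ hV x k).1
    (spikeMass_succ_sub_mem_Icc hφ hV x k).2

theorem kalikowProb_congr (hφ : ∀ i s, φ i s ∈ Icc (0 : ℝ) 1) (hV : Monotone (V i)) {k : ℕ}
    {x y : ℤ → I → Bool} (hxy : EqOnWindow (V i k) k x y) (a : Bool) :
    kalikowProb φ W g V i k a x = kalikowProb φ W g V i k a y := by
  have h : ∀ n ≤ k + 1, spikeMass φ W g V i x n = spikeMass φ W g V i y n := fun n hn =>
    greedyMass_congr fun l hl => rSeq_congr hφ hV hxy false l (hl.trans hn)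
  simp only [kalikowProb, h k k.le_succ, h (k + 1) le_rfl]

theorem hasSum_lamS (hφ : ∀ i s, φ i s ∈ Icc (0 : ℝ) 1) (hV : Monotone (V i))
    (hA : Tendsto (alphaSeq φ W g V i) atTop (𝓝 1)) :
    HasSum (lamS φ W g V i) (1 - lamNegS φ W g i) := by
  rw [funext (lamS_eq_alphaSeq_sub φ W g V i)]
  exact (alphaSeq_monotone hφ hV).hasSum_sub_of_tendsto hA

theorem pcondS_zero_eq_tsum (hφ : ∀ i s, φ i s ∈ Icc (0 : ℝ) 1) (hV : Monotone (V i))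
    (hA : Tendsto (alphaSeq φ W g V i) atTop (𝓝 1)) (x : ℤ → I → Bool) (a : Bool) :
    pcondS φ W g i 0 a x
      = rnegS φ W g i a + ∑' k, lamS φ W g V i k * kalikowProb φ W g V i k a x := by
  have htrue : HasSum (fun k => lamS φ W g V i k * kalikowProb φ W g V i k true x)
      (pcondS φ W g i 0 true x - rnegS φ W g i true) := by
    simp_rw [lamS_mul_kalikowProb_true hφ hV]
    exact (greedyMass_monotone _ _ _).hasSum_sub_of_tendsto (tendsto_spikeMass hφ hA x)
  cases a
  · have hfalse : HasSum (fun k => lamS φ W g V i k * kalikowProb φ W g V i k false x)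
        (1 - lamNegS φ W g i - (pcondS φ W g i 0 true x - rnegS φ W g i true)) := by
      refine ((hasSum_lamS hφ hV hA).sub htrue).congr_fun fun k => ?_
      linear_combination lamS φ W g V i k * kalikowProb_false_add_true (φ := φ) (W := W)
        (g := g) (V := V) (i := i) k x
    rw [hfalse.tsum_eq, lamNegS]
    linarith [pcondS_true_add_false (φ := φ) (W := W) (g := g) (i := i) 0 x]
  · rw [htrue.tsum_eq]
    ring

end Decomposition

theorem eqOnWindow_shift {I : Type*} {S : Finset I} {k : ℕ} {t : ℤ} {x y : ℤ → I → Bool}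
    (h : ∀ j ∈ S, ∀ s : ℤ, t - (k : ℤ) - 1 ≤ s → s ≤ t - 1 → x s j = y s j) :
    EqOnWindow S k (fun s j => x (s + t) j) (fun s j => y (s + t) j) :=
  fun j hj s h₁ h₂ => h j hj (s + t) (by omega) (by omega)

end NeuronSys

theorem spacetime_kalikow_decomposition_general
    {I : Type*} [DecidableEq I]
    (W : I → I → ℝ) (g : I → ℕ → ℝ) (V : I → ℕ → Finset I)
    (γ : ℝ) (φ : I → ℝ → ℝ)
    (hgpos : ∀ j n, 0 ≤ g j n)
    (hgsum : ∀ j, Summable (g j))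
    (hγ : 0 < γ)
    (hV0 : ∀ i, V i 0 = {i})
    (hVmono : ∀ i, Monotone (V i))
    (hφrange : ∀ i s, φ i s ∈ Set.Icc (0:ℝ) 1)
    (hφLip : ∀ i s s', |φ i s - φ i s'| ≤ γ * |s - s'|)
    (hmain : (⨆ i : I, ∑' k : ℕ, ((k : ℝ≥0∞) + 1) * ((V i k).card : ℝ≥0∞) *
        ((∑' j : I, (if j ∈ (if k = 0 then (∅ : Finset I) else V i (k-1)) then 0
            else ENNReal.ofReal |W j i| *
              ∑' n : ℕ, if 1 ≤ n then ENNReal.ofReal (g j n) else 0))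
         + ∑' j : I, (if j ∈ (if k = 0 then (∅ : Finset I) else V i (k-1)) then
              ENNReal.ofReal |W j i| *
                ∑' n : ℕ, (if max k 1 ≤ n then ENNReal.ofReal (g j n) else 0)
            else 0)))
      < ENNReal.ofReal (1/γ)) :
    (∀ i : I,
      lamNegS φ W g i ∈ Set.Icc (0:ℝ) 1 ∧
      (∀ k : ℕ, lamS φ W g V i k ∈ Set.Icc (0:ℝ) 1) ∧
      lamNegS φ W g i + ∑' k : ℕ, lamS φ W g V i k = 1) ∧
    ∀ (i : I) (t : ℤ), ∃ p : ℕ → Bool → (ℤ → I → Bool) → ℝ,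
      -- (1) p^{[0]}(a|·) depends only on x_{t-1}(i)
      (∀ (a : Bool) (x y : ℤ → I → Bool), x (t-1) i = y (t-1) i → p 0 a x = p 0 a y) ∧
      -- (2) for k ≥ 1, p^{[k]}(a|·) depends only on (x_s(j) : t-k-1 ≤ s ≤ t-1, j ∈ V_i(k))
      (∀ (k : ℕ), 1 ≤ k → ∀ (a : Bool) (x y : ℤ → I → Bool),
        (∀ j ∈ V i k, ∀ s : ℤ, t - (k : ℤ) - 1 ≤ s → s ≤ t - 1 → x s j = y s j) →
        p k a x = p k a y) ∧
      -- (3) p^{[k]}(·|x) is a probability on {0,1}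
      (∀ (k : ℕ) (x : ℤ → I → Bool),
        p k true x ∈ Set.Icc (0:ℝ) 1 ∧ p k false x + p k true x = 1) ∧
      -- (4) the convex decomposition of p_{(i,t)}(a|x)
      (∀ (x : ℤ → I → Bool) (a : Bool),
        pcondS φ W g i t a x
          = lamNegS φ W g i * (rnegS φ W g i a / lamNegS φ W g i)
            + ∑' k : ℕ, lamS φ W g V i k * p k a x) := by
  have hself : ∀ i k, i ∈ V i k := fun i k => hVmono i k.zero_le (by simp [hV0 i])
  have hsum : ∀ i, ∑' k : ℕ, ((k : ℝ≥0∞) + 1) * (V i k).card * windowError W g V i k ≠ ⊤ :=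
    fun i => ne_top_of_lt ((le_iSup (fun i => ∑' k : ℕ,
      ((k : ℝ≥0∞) + 1) * (V i k).card * windowError W g V i k) i).trans_lt hmain)
  have hA : ∀ i, Tendsto (alphaSeq φ W g V i) atTop (𝓝 1) := fun i =>
    tendsto_alphaSeq hφrange hφLip hγ.le hgpos hgsum (hself i) (hsum i)
  refine ⟨fun i => ⟨lamNegS_mem_Icc hφrange, lamS_mem_Icc hφrange (hVmono i), ?_⟩, fun i t =>
    ⟨fun k a x => kalikowProb φ W g V i k a (fun s j => x (s + t) j), ?_, ?_, ?_, ?_⟩⟩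
  · rw [(hasSum_lamS hφrange (hVmono i) (hA i)).tsum_eq]
    ring
  · refine fun a x y hxy => kalikowProb_congr hφrange (hVmono i) (eqOnWindow_shift ?_) a
    intro j hj s h₁ h₂
    obtain rfl : j = i := by simpa [hV0 i] using hj
    obtain rfl : s = t - 1 := by omega
    exact hxy
  · exact fun k _ a x y hxy => kalikowProb_congr hφrange (hVmono i) (eqOnWindow_shift hxy) a
  · exact fun k x => ⟨kalikowProb_true_mem_Icc hφrange (hVmono i) k _,
      kalikowProb_false_add_true k _⟩
  · intro x a
    rw [pcondS_shift, pcondS_zero_eq_tsum hφrange (hVmono i) (hA i),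
      mul_div_cancel_of_nonneg_of_le (rnegS_nonneg hφrange a) (rnegS_le_lamNegS hφrange a)]

/-- **Proposition 2 (Space-time Kalikow-type decomposition).** Under the summability of
the weights, the uniform Lipschitz condition and the space-time summability condition,
the weights `λ_i(k)`, `k ≥ -1`, lie in `[0,1]` and sum to `1`, and for every `(i,t)` there
is a family `(p^{[k]}_{(i,t)}(a|·))_{k≥0}` of conditional probabilities such that
`p^{[0]}(a|x)` depends only on `x_{t-1}(i)`, `p^{[k]}(a|x)` depends only on
`(x_s(j) : t-k-1 ≤ s ≤ t-1, j ∈ V_i(k))` for `k ≥ 1`, and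
`p_{(i,t)}(a|x) = λ_i(-1) p^{[-1]}(a) + ∑_{k≥0} λ_i(k) p^{[k]}(a|x)` with
`p^{[-1]}(a) = r_i^{[-1]}(a)/λ_i(-1)`. -/
theorem spacetime_kalikow_decomposition
    {I : Type*} [Countable I] [Nonempty I] [DecidableEq I]
    (W : I → I → ℝ) (g : I → ℕ → ℝ) (V : I → ℕ → Finset I)
    (γ : ℝ) (φ : I → ℝ → ℝ)
    (hWdiag : ∀ j, W j j = 0)
    (hgpos : ∀ j n, 0 ≤ g j n)
    (hgsum : ∀ j, Summable (g j))
    (hγ : 0 < γ)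
    (hWsum : (⨆ i : I, ∑' j : I, ENNReal.ofReal |W j i|) < ⊤)
    (hV0 : ∀ i, V i 0 = {i})
    (hVmono : ∀ i, Monotone (V i))
    (hVunion : ∀ i, (⋃ k, (V i k : Set I)) = {j | j ≠ i ∧ W j i ≠ 0} ∪ {i})
    (hφrange : ∀ i s, φ i s ∈ Set.Icc (0:ℝ) 1)
    (hφLip : ∀ i s s', |φ i s - φ i s'| ≤ γ * |s - s'|)
    (hmain : (⨆ i : I, ∑' k : ℕ, ((k : ℝ≥0∞) + 1) * ((V i k).card : ℝ≥0∞) *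
        ((∑' j : I, (if j ∈ (if k = 0 then (∅ : Finset I) else V i (k-1)) then 0
            else ENNReal.ofReal |W j i| *
              ∑' n : ℕ, if 1 ≤ n then ENNReal.ofReal (g j n) else 0))
         + ∑' j : I, (if j ∈ (if k = 0 then (∅ : Finset I) else V i (k-1)) then
              ENNReal.ofReal |W j i| *
                ∑' n : ℕ, (if max k 1 ≤ n then ENNReal.ofReal (g j n) else 0)
            else 0)))
      < ENNReal.ofReal (1/γ)) :
    (∀ i : I,
      lamNegS φ W g i ∈ Set.Icc (0:ℝ) 1 ∧
      (∀ k : ℕ, lamS φ W g V i k ∈ Set.Icc (0:ℝ) 1) ∧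
      lamNegS φ W g i + ∑' k : ℕ, lamS φ W g V i k = 1) ∧
    ∀ (i : I) (t : ℤ), ∃ p : ℕ → Bool → (ℤ → I → Bool) → ℝ,
      -- (1) p^{[0]}(a|·) depends only on x_{t-1}(i)
      (∀ (a : Bool) (x y : ℤ → I → Bool), x (t-1) i = y (t-1) i → p 0 a x = p 0 a y) ∧
      -- (2) for k ≥ 1, p^{[k]}(a|·) depends only on (x_s(j) : t-k-1 ≤ s ≤ t-1, j ∈ V_i(k))
      (∀ (k : ℕ), 1 ≤ k → ∀ (a : Bool) (x y : ℤ → I → Bool),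
        (∀ j ∈ V i k, ∀ s : ℤ, t - (k : ℤ) - 1 ≤ s → s ≤ t - 1 → x s j = y s j) →
        p k a x = p k a y) ∧
      -- (3) p^{[k]}(·|x) is a probability on {0,1}
      (∀ (k : ℕ) (x : ℤ → I → Bool),
        p k true x ∈ Set.Icc (0:ℝ) 1 ∧ p k false x + p k true x = 1) ∧
      -- (4) the convex decomposition of p_{(i,t)}(a|x)
      (∀ (x : ℤ → I → Bool) (a : Bool),
        pcondS φ W g i t a x
          = lamNegS φ W g i * (rnegS φ W g i a / lamNegS φ W g i)
            + ∑' k : ℕ, lamS φ W g V i k * p k a x) :=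
  spacetime_kalikow_decomposition_general W g V γ φ hgpos hgsum hγ hV0 hVmono hφrange hφLip hmain
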